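/- arXiv:2605.00045 — 9 statements merged into one kernel-verified Lean document; each statement's English description precedes it below -/
import Mathlib

section
/- Let φ be an increasing bijection on [0,1], (T_L)_φ(x,y) = φ⁻¹(max(0, φ(x) + φ(y) − 1)) the φ-conjugate of the Łukasiewicz t-norm, and I(x,y) = φ⁻¹(min(1, 1 − φ(x) + φ(y))). If a fuzzy relation R on U is ε-(T_L)_φ-transitive (i.e. inf_{x,y,z} I((T_L)_φ(R(x,y),R(y,z)), R(x,z)) ≥ ε), then the fuzzy relation R' defined by R'(x,y) = (T_L)_φ(R(x,y), ε) is (T_L)_φ-transitive, i.e. (T_L)_φ(R'(x,y), R'(y,z)) ≤ R'(x,z) for all x,y,z. -/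
open Set

/-- Corollary 3.3: if `R` is ε-(T_L)_φ-transitive with respect to the (S,N)-implication
`I(x,y) = φ⁻¹(min(1, 1 − φ(x) + φ(y)))`, then `R'(x,y) = (T_L)_φ(R(x,y), ε)` is
(T_L)_φ-transitive, where `(T_L)_φ(a,b) = φ⁻¹(max(0, φ(a) + φ(b) − 1))`. -/
theorem stmt_1 {U : Type*} [Nonempty U]
    (φ ψ : ℝ → ℝ)
    (hφmono : StrictMonoOn φ (Icc (0:ℝ) 1))
    (hφ0 : φ 0 = 0) (hφ1 : φ 1 = 1)
    (hφmap : MapsTo φ (Icc (0:ℝ) 1) (Icc (0:ℝ) 1))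
    (hψmap : MapsTo ψ (Icc (0:ℝ) 1) (Icc (0:ℝ) 1))
    (hψφ : ∀ x ∈ Icc (0:ℝ) 1, ψ (φ x) = x)
    (hφψ : ∀ x ∈ Icc (0:ℝ) 1, φ (ψ x) = x)
    (TL : ℝ → ℝ → ℝ)
    (hTL : ∀ a b, TL a b = ψ (max 0 (φ a + φ b - 1)))
    (R : U → U → ℝ) (hR : ∀ x y, R x y ∈ Icc (0:ℝ) 1)
    (ε : ℝ) (hε : ε ∈ Icc (0:ℝ) 1)
    (htrans : sInf {v : ℝ | ∃ x y z : U,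
        v = ψ (min 1 (1 - φ (TL (R x y) (R y z)) + φ (R x z)))} ≥ ε) :
    ∀ x y z : U, TL (TL (R x y) ε) (TL (R y z) ε) ≤ TL (R x z) ε := by
  -- membership helper
  have hmax : ∀ p q : ℝ, p ∈ Icc (0:ℝ) 1 → q ∈ Icc (0:ℝ) 1 →
      max 0 (p + q - 1) ∈ Icc (0:ℝ) 1 := by
    intro p q hp hq
    constructor
    · exact le_max_left _ _
    · apply max_le (by norm_num)
      linarith [hp.2, hq.2]
  -- ψ mono on Icc
  have hψmono : ∀ m n : ℝ, m ∈ Icc (0:ℝ) 1 → n ∈ Icc (0:ℝ) 1 → m ≤ n → ψ m ≤ ψ n := by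
    intro m n hm hn hmn
    have := (hφmono.le_iff_le (hψmap hm) (hψmap hn)).mp
    apply this
    rw [hφψ m hm, hφψ n hn]; exact hmn
  -- φ(TL u v) computation
  have hφTL : ∀ u v : ℝ, u ∈ Icc (0:ℝ) 1 → v ∈ Icc (0:ℝ) 1 →
      φ (TL u v) = max 0 (φ u + φ v - 1) := by
    intro u v hu hv
    rw [hTL, hφψ _ (hmax _ _ (hφmap hu) (hφmap hv))]
  have hTLmem : ∀ u v : ℝ, u ∈ Icc (0:ℝ) 1 → v ∈ Icc (0:ℝ) 1 → TL u v ∈ Icc (0:ℝ) 1 := by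
    intro u v hu hv
    rw [hTL]
    exact hψmap (hmax _ _ (hφmap hu) (hφmap hv))
  intro x y z
  set a := φ (R x y) with ha
  set b := φ (R y z) with hb
  set c := φ (R x z) with hc
  set e := φ ε with he
  have haI : a ∈ Icc (0:ℝ) 1 := hφmap (hR x y)
  have hbI : b ∈ Icc (0:ℝ) 1 := hφmap (hR y z)
  have hcI : c ∈ Icc (0:ℝ) 1 := hφmap (hR x z)
  have heI : e ∈ Icc (0:ℝ) 1 := hφmap hε
  -- extract the transitivity inequality for x y z
  have hbdd : BddBelow {v : ℝ | ∃ x y z : U,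
      v = ψ (min 1 (1 - φ (TL (R x y) (R y z)) + φ (R x z)))} := by
    refine ⟨0, ?_⟩
    rintro v ⟨x', y', z', rfl⟩
    have hmin : min 1 (1 - φ (TL (R x' y') (R y' z')) + φ (R x' z')) ∈ Icc (0:ℝ) 1 := by
      rw [hφTL _ _ (hR x' y') (hR y' z')]
      constructor
      · apply le_min (by norm_num)
        have h1 := (hφmap (hR x' z')).1
        have h2 : φ (R x' y') + φ (R y' z') - 1 ≤ 1 := by
          linarith [(hφmap (hR x' y')).2, (hφmap (hR y' z')).2]
        have h3 : max 0 (φ (R x' y') + φ (R y' z') - 1) ≤ 1 := max_le (by norm_num) h2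
        linarith
      · exact min_le_left _ _
    exact (hψmap hmin).1
  have hmem : ψ (min 1 (1 - φ (TL (R x y) (R y z)) + φ (R x z))) ∈
      {v : ℝ | ∃ x y z : U, v = ψ (min 1 (1 - φ (TL (R x y) (R y z)) + φ (R x z)))} :=
    ⟨x, y, z, rfl⟩
  have hv : ε ≤ ψ (min 1 (1 - φ (TL (R x y) (R y z)) + φ (R x z))) :=
    le_trans htrans (csInf_le hbdd hmem)
  -- turn into an inequality on φ-values
  have hminmem : min 1 (1 - φ (TL (R x y) (R y z)) + φ (R x z)) ∈ Icc (0:ℝ) 1 := by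
    rw [hφTL _ _ (hR x y) (hR y z)]
    constructor
    · apply le_min (by norm_num)
      have h2 : a + b - 1 ≤ 1 := by linarith [haI.2, hbI.2]
      have h3 : max 0 (a + b - 1) ≤ 1 := max_le (by norm_num) h2
      linarith [hcI.1]
    · exact min_le_left _ _
  have hkey : e ≤ min 1 (1 - max 0 (a + b - 1) + c) := by
    have := (hφmono.le_iff_le hε (hψmap hminmem)).mpr hv
    rwa [hφψ _ hminmem, hφTL _ _ (hR x y) (hR y z)] at this
  have hkey' : max 0 (a + b - 1) + e - 1 ≤ c := by
    have := le_trans hkey (min_le_right _ _)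
    linarith
  -- the arithmetic core
  have harith : max 0 (max 0 (a + e - 1) + max 0 (b + e - 1) - 1) ≤ max 0 (c + e - 1) := by
    rcases le_or_gt (max 0 (a + e - 1) + max 0 (b + e - 1) - 1) 0 with h | h
    · exact max_le (le_max_left _ _) (le_trans h (le_max_left _ _))
    · have hA1 : max 0 (a + e - 1) ≤ max 0 e := by
        apply max_le (le_max_left _ _)
        apply le_max_of_le_right; linarith [haI.2]
      have hB1 : max 0 (b + e - 1) ≤ max 0 e := by
        apply max_le (le_max_left _ _)
        apply le_max_of_le_right; linarith [hbI.2]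
      have hemax : max 0 e = e := max_eq_right heI.1
      rw [hemax] at hA1 hB1
      have hApos : 0 < a + e - 1 := by
        by_contra hc'
        push_neg at hc'
        rw [max_eq_left hc'] at h
        linarith [hB1, heI.2]

      have hBpos : 0 < b + e - 1 := by
        by_contra hc'
        push_neg at hc'
        rw [max_eq_left hc'] at h
        linarith [hA1, heI.2]
      rw [max_eq_right hApos.le, max_eq_right hBpos.le] at h ⊢
      have hab : 0 ≤ a + b - 1 := by linarith [heI.2]
      rw [max_eq_right hab] at hkey'
      have hfin : a + e - 1 + (b + e - 1) - 1 ≤ c + e - 1 := by linarith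
      exact max_le_max le_rfl hfin
  -- conclude via ψ-monotonicity
  have hTL1 : TL (R x y) ε ∈ Icc (0:ℝ) 1 := hTLmem _ _ (hR x y) hε
  have hTL2 : TL (R y z) ε ∈ Icc (0:ℝ) 1 := hTLmem _ _ (hR y z) hε
  rw [hTL (TL (R x y) ε) (TL (R y z) ε), hTL (R x z) ε]
  apply hψmono _ _ (hmax _ _ (hφmap hTL1) (hφmap hTL2)) (hmax _ _ hcI heI)
  rw [hφTL _ _ (hR x y) hε, hφTL _ _ (hR y z) hε]
  exact harith
end

section
/- Let T be a left-continuous t-norm and I_T its residual implication. If a fuzzy relation R on U is ε-T-transitive with respect to I_T (i.e. T(ε, T(R(x,y),R(y,z))) ≤ R(x,z) for all x,y,z), then the relation R_{(T,ε)}(x,y) = T(R(x,y), ε) is T-transitive: T(T(R(x,y),ε), T(R(y,z),ε)) ≤ T(R(x,z), ε) for all x,y,z ∈ U. -/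
open Set

/-- A t-norm on the unit interval (viewed as a binary operation on ℝ). -/
def IsTnorm (T : ℝ → ℝ → ℝ) : Prop :=
  (∀ x ∈ Icc (0:ℝ) 1, ∀ y ∈ Icc (0:ℝ) 1, T x y ∈ Icc (0:ℝ) 1) ∧
  (∀ x y, T x y = T y x) ∧
  (∀ x y z, T (T x y) z = T x (T y z)) ∧
  (∀ x y z, y ≤ z → T x y ≤ T x z) ∧
  (∀ x ∈ Icc (0:ℝ) 1, T x 1 = x)

/-- The residual implication `I_T(x,y) = sup{z ∈ [0,1] : T(x,z) ≤ y}`. -/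
noncomputable def residImp (T : ℝ → ℝ → ℝ) (x y : ℝ) : ℝ :=
  sSup {z : ℝ | z ∈ Icc (0:ℝ) 1 ∧ T x z ≤ y}

/-- Corollary 3.8: for a left-continuous t-norm `T` (expressed via the adjunction with
its residual `I_T`), if `R` is ε-T-transitive with respect to `I_T`
(i.e. `T(ε, T(R(x,y),R(y,z))) ≤ R(x,z)` for all `x,y,z`), then
`R_{(T,ε)}(x,y) = T(R(x,y), ε)` is `T`-transitive:
`T(T(R(x,y),ε), T(R(y,z),ε)) ≤ T(R(x,z), ε)` for all `x,y,z`. -/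
theorem stmt_4 {U : Type*}
    (T : ℝ → ℝ → ℝ) (hT : IsTnorm T)
    (hadj : ∀ x ∈ Icc (0:ℝ) 1, ∀ y ∈ Icc (0:ℝ) 1, ∀ z ∈ Icc (0:ℝ) 1,
      (T x y ≤ z ↔ y ≤ residImp T x z))
    (R : U → U → ℝ) (hR : ∀ x y, R x y ∈ Icc (0:ℝ) 1)
    (ε : ℝ) (hε : ε ∈ Icc (0:ℝ) 1)
    (htrans : ∀ x y z : U, T ε (T (R x y) (R y z)) ≤ R x z) :
    ∀ x y z : U, T (T (R x y) ε) (T (R y z) ε) ≤ T (R x z) ε := by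
  obtain ⟨hcl, hcomm, hassoc, hmono, hone⟩ := hT
  have hmono' : ∀ a b c : ℝ, b ≤ c → T b a ≤ T c a := fun a b c h => by
    rw [hcomm b a, hcomm c a]; exact hmono a b c h
  intro x y z
  set a := R x y
  set b := R y z
  have key : T (T a ε) (T b ε) = T (T ε (T a b)) ε := by
    calc T (T a ε) (T b ε) = T a (T ε (T b ε)) := hassoc _ _ _
      _ = T a (T (T ε b) ε) := by rw [hassoc]
      _ = T a (T (T b ε) ε) := by rw [hcomm ε b]
      _ = T a (T b (T ε ε)) := by rw [hassoc]
      _ = T (T (T a b) ε) ε := by rw [← hassoc, ← hassoc]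
      _ = T (T ε (T a b)) ε := by rw [hcomm (T a b) ε]
  rw [key]
  exact hmono' ε _ _ (htrans x y z)
end

section
/- Let T be a left-continuous t-norm on [0,1], R a fuzzy relation on U, and define R_T(x,y) = sup_{z∈U} T(R(x,z), R(z,y)) and R_{(T,T',ε)}(x,y) = T'(R_T(x,y), ε) for a left-continuous t-norm T'. Then R is ε-T-transitive with respect to the residual implication of T' if and only if R_{(T,T',ε)}(x,y) ≤ R(x,y) for all x,y ∈ U. -/
open Set

/-- With `R_T(x,y) = sup_{z} T(R(x,z),R(z,y))` and `R_{(T,T',ε)}(x,y) = T'(R_T(x,y), ε)`,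
the relation `R` is ε-T-transitive with respect to the residual of `T'`
(i.e. `inf_{x,y,z} I_{T'}(T(R(x,y),R(y,z)), R(x,z)) ≥ ε`) iff
`R_{(T,T',ε)} ≤ R` pointwise.  Left-continuity of `T` and `T'` is expressed by the
adjunction and by commuting with suprema. -/
theorem stmt_5 {U : Type*} [Nonempty U]
    (T T' : ℝ → ℝ → ℝ) (hT : IsTnorm T) (hT' : IsTnorm T')
    (hadj : ∀ x ∈ Icc (0:ℝ) 1, ∀ y ∈ Icc (0:ℝ) 1, ∀ z ∈ Icc (0:ℝ) 1,
      (T' x y ≤ z ↔ y ≤ residImp T' x z))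
    (hTlc : ∀ (c : ℝ) (S : Set ℝ), S.Nonempty → BddAbove S →
      T c (sSup S) = sSup ((fun s => T c s) '' S))
    (hT'lc : ∀ (c : ℝ) (S : Set ℝ), S.Nonempty → BddAbove S →
      T' c (sSup S) = sSup ((fun s => T' c s) '' S))
    (R : U → U → ℝ) (hR : ∀ x y, R x y ∈ Icc (0:ℝ) 1)
    (ε : ℝ) (hε : ε ∈ Icc (0:ℝ) 1) :
    sInf {v : ℝ | ∃ x y z : U,
        v = residImp T' (T (R x y) (R y z)) (R x z)} ≥ ε ↔
      ∀ x y : U,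
        T' (sSup {v : ℝ | ∃ z : U, v = T (R x z) (R z y)}) ε ≤ R x y := by

  obtain ⟨hTr, hTc, hTa, hTm, hTu⟩ := hT
  obtain ⟨hT'r, hT'c, hT'a, hT'm, hT'u⟩ := hT'
  have hT'zero : ∀ t ∈ Icc (0:ℝ) 1, T' t 0 = 0 := by
    intro t ht
    have h1 : T' 0 t ≤ T' 0 1 := hT'm 0 t 1 ht.2
    rw [hT'u 0 ⟨le_refl 0, zero_le_one⟩] at h1
    have h2 : (0:ℝ) ≤ T' 0 t := (hT'r 0 ⟨le_refl 0, zero_le_one⟩ t ht).1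
    rw [hT'c]
    linarith
  have residMem : ∀ t ∈ Icc (0:ℝ) 1, ∀ c ∈ Icc (0:ℝ) 1,
      residImp T' t c ∈ Icc (0:ℝ) 1 := by
    intro t ht c hc
    have h0 : (0:ℝ) ∈ {z : ℝ | z ∈ Icc (0:ℝ) 1 ∧ T' t z ≤ c} := by
      refine ⟨⟨le_refl 0, zero_le_one⟩, ?_⟩
      rw [hT'zero t ht]; exact hc.1
    have hbdd : BddAbove {z : ℝ | z ∈ Icc (0:ℝ) 1 ∧ T' t z ≤ c} :=
      ⟨1, fun z hz => hz.1.2⟩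
    constructor
    · exact le_csSup hbdd h0
    · exact csSup_le ⟨0, h0⟩ fun z hz => hz.1.2
  have key : ∀ x y z : U,
      (T' (T (R x y) (R y z)) ε ≤ R x z ↔
        ε ≤ residImp T' (T (R x y) (R y z)) (R x z)) :=
    fun x y z => hadj _ (hTr _ (hR x y) _ (hR y z)) _ hε _ (hR x z)
  constructor
  · intro h x y
    have hSne : {v : ℝ | ∃ z : U, v = T (R x z) (R z y)}.Nonempty :=
      ⟨_, Classical.arbitrary U, rfl⟩
    have hSbdd : BddAbove {v : ℝ | ∃ z : U, v = T (R x z) (R z y)} :=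
      ⟨1, by rintro v ⟨z, rfl⟩; exact (hTr _ (hR x z) _ (hR z y)).2⟩
    have h1 : T' (sSup {v : ℝ | ∃ z : U, v = T (R x z) (R z y)}) ε
        = sSup ((fun s => T' ε s) '' {v : ℝ | ∃ z : U, v = T (R x z) (R z y)}) := by
      rw [hT'c, hT'lc ε _ hSne hSbdd]
    rw [h1]
    apply csSup_le (hSne.image _)
    rintro v ⟨s, ⟨z, rfl⟩, rfl⟩
    simp only []
    rw [hT'c]
    refine (key x z y).2 ?_
    refine le_trans h (csInf_le ?_ ⟨x, z, y, rfl⟩)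
    refine ⟨0, ?_⟩
    rintro w ⟨a, b, c, rfl⟩
    exact (residMem _ (hTr _ (hR a b) _ (hR b c)) _ (hR a c)).1
  · intro h
    apply le_csInf
    · obtain ⟨x⟩ := ‹Nonempty U›
      exact ⟨_, x, x, x, rfl⟩
    · rintro v ⟨x, y, z, rfl⟩
      refine (key x y z).1 ?_
      have hSbdd : BddAbove {v : ℝ | ∃ w : U, v = T (R x w) (R w z)} :=
        ⟨1, by rintro v ⟨w, rfl⟩; exact (hTr _ (hR x w) _ (hR w z)).2⟩
      have hle : T (R x y) (R y z) ≤ sSup {v : ℝ | ∃ w : U, v = T (R x w) (R w z)} :=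
        le_csSup hSbdd ⟨y, rfl⟩
      calc T' (T (R x y) (R y z)) ε
          = T' ε (T (R x y) (R y z)) := hT'c _ _
        _ ≤ T' ε (sSup {v : ℝ | ∃ w : U, v = T (R x w) (R w z)}) := hT'm _ _ _ hle
        _ = T' (sSup {v : ℝ | ∃ w : U, v = T (R x w) (R w z)}) ε := hT'c _ _
        _ ≤ R x z := h x z
end

section
/- Let φ be an increasing bijection on [0,1], N a strict fuzzy negation with N(x) ≥ φ⁻¹(1−φ(x)), and I(x,y) = φ⁻¹(min(1, φ(N(x)) + φ(min(x,y)))) the QL-implication generated by (N, T_M, (S_L)_φ). A fuzzy relation R on U satisfies inf_{x,y,z} I(T(R(x,y),R(y,z)), R(x,z)) ≥ ε if and only if T(R(x,y),R(y,z)) ≤ N⁻¹(φ⁻¹(max(0, φ(ε) − φ(R(x,z))))) for all pairs (x,z) with R(x,z) < T(R(x,y),R(y,z)) for some y, and all such y. -/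
open Set

/-- Proposition 3.9: for the QL-implication
`I(x,y) = φ⁻¹(min(1, φ(N(x)) + φ(min(x,y))))` generated by `(N, T_M, (S_L)_φ)`,
with `N` a strict negation satisfying `N(x) ≥ φ⁻¹(1 − φ(x))`, the relation `R`
satisfies `inf_{x,y,z} I(T(R(x,y),R(y,z)), R(x,z)) ≥ ε` iff
`T(R(x,y),R(y,z)) ≤ N⁻¹(φ⁻¹(max(0, φ(ε) − φ(R(x,z)))))` for all `(x,z)` with
`R(x,z) < T(R(x,y),R(y,z))` for some `y`, and all such `y`. -/
theorem stmt_6 {U : Type*} [Nonempty U]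
    (T : ℝ → ℝ → ℝ) (hT : IsTnorm T)
    (φ ψ : ℝ → ℝ)
    (hφmono : StrictMonoOn φ (Icc (0:ℝ) 1))
    (hφ0 : φ 0 = 0) (hφ1 : φ 1 = 1)
    (hφmap : MapsTo φ (Icc (0:ℝ) 1) (Icc (0:ℝ) 1))
    (hψmap : MapsTo ψ (Icc (0:ℝ) 1) (Icc (0:ℝ) 1))
    (hψφ : ∀ x ∈ Icc (0:ℝ) 1, ψ (φ x) = x)
    (hφψ : ∀ x ∈ Icc (0:ℝ) 1, φ (ψ x) = x)
    (N Ninv : ℝ → ℝ)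
    (hNanti : StrictAntiOn N (Icc (0:ℝ) 1))
    (hNcont : ContinuousOn N (Icc (0:ℝ) 1))
    (hN0 : N 0 = 1) (hN1 : N 1 = 0)
    (hNmap : MapsTo N (Icc (0:ℝ) 1) (Icc (0:ℝ) 1))
    (hNinvN : ∀ x ∈ Icc (0:ℝ) 1, Ninv (N x) = x)
    (hNNinv : ∀ x ∈ Icc (0:ℝ) 1, N (Ninv x) = x)
    (hNge : ∀ x ∈ Icc (0:ℝ) 1, N x ≥ ψ (1 - φ x))
    (R : U → U → ℝ) (hR : ∀ x y, R x y ∈ Icc (0:ℝ) 1)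
    (ε : ℝ) (hε : ε ∈ Icc (0:ℝ) 1) :
    sInf {v : ℝ | ∃ x y z : U,
        v = ψ (min 1 (φ (N (T (R x y) (R y z))) +
              φ (min (T (R x y) (R y z)) (R x z))))} ≥ ε ↔
      ∀ x y z : U, R x z < T (R x y) (R y z) →
        T (R x y) (R y z) ≤ Ninv (ψ (max 0 (φ ε - φ (R x z)))) := by
  -- basic facts
  have hφmono' := hφmono.monotoneOn
  have hψmono : ∀ u ∈ Icc (0:ℝ) 1, ∀ v ∈ Icc (0:ℝ) 1, u ≤ v → ψ u ≤ ψ v := by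
    intro u hu v hv huv
    by_contra h'
    push_neg at h'
    have := hφmono (hψmap hv) (hψmap hu) h'
    rw [hφψ u hu, hφψ v hv] at this
    exact absurd huv (not_le.mpr this)
  have hφrefl : ∀ u ∈ Icc (0:ℝ) 1, ∀ v ∈ Icc (0:ℝ) 1, φ u ≤ φ v → u ≤ v := by
    intro u hu v hv h'
    by_contra h''
    push_neg at h''
    exact absurd h' (not_le.mpr (hφmono hv hu h''))
  have hNinvmem : ∀ w ∈ Icc (0:ℝ) 1, Ninv w ∈ Icc (0:ℝ) 1 := by
    intro w hw
    have hsub := intermediate_value_Icc' (zero_le_one) hNcont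
    have : w ∈ N '' Icc (0:ℝ) 1 := by
      apply hsub
      rw [hN1, hN0]; exact hw
    obtain ⟨t, ht, hNt⟩ := this
    rw [← hNt, hNinvN t ht]; exact ht
  have hNinvanti : ∀ u ∈ Icc (0:ℝ) 1, ∀ v ∈ Icc (0:ℝ) 1, u ≤ v → Ninv v ≤ Ninv u := by
    intro u hu v hv huv
    by_contra h'
    push_neg at h'
    have := hNanti (hNinvmem u hu) (hNinvmem v hv) h'
    rw [hNNinv u hu, hNNinv v hv] at this
    exact absurd huv (not_le.mpr this)
  have hTmem : ∀ x y z : U, T (R x y) (R y z) ∈ Icc (0:ℝ) 1 :=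
    fun x y z => hT.1 _ (hR x y) _ (hR y z)
  have hminmem : ∀ x y z : U, min (T (R x y) (R y z)) (R x z) ∈ Icc (0:ℝ) 1 :=
    fun x y z => ⟨le_min (hTmem x y z).1 (hR x z).1, min_le_of_left_le (hTmem x y z).2⟩
  have hmmem : ∀ x y z : U, min 1 (φ (N (T (R x y) (R y z))) +
      φ (min (T (R x y) (R y z)) (R x z))) ∈ Icc (0:ℝ) 1 := by
    intro x y z
    constructor
    · exact le_min zero_le_one (add_nonneg (hφmap (hNmap (hTmem x y z))).1
        (hφmap (hminmem x y z)).1)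
    · exact min_le_left _ _
  have hwmem : ∀ x z : U, max 0 (φ ε - φ (R x z)) ∈ Icc (0:ℝ) 1 := by
    intro x z
    refine ⟨le_max_left _ _, max_le zero_le_one ?_⟩
    have h1 : φ ε ≤ 1 := (hφmap hε).2
    have h2 : 0 ≤ φ (R x z) := (hφmap (hR x z)).1
    linarith
  constructor
  · intro h x y z hlt
    set a := T (R x y) (R y z) with ha
    set c := R x z with hc
    have hmin : min a c = c := min_eq_right hlt.le
    have hvS : ψ (min 1 (φ (N a) + φ (min a c))) ∈ {v : ℝ | ∃ x y z : U,
        v = ψ (min 1 (φ (N (T (R x y) (R y z))) +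
              φ (min (T (R x y) (R y z)) (R x z))))} := ⟨x, y, z, rfl⟩
    have hbdd : BddBelow {v : ℝ | ∃ x y z : U,
        v = ψ (min 1 (φ (N (T (R x y) (R y z))) +
              φ (min (T (R x y) (R y z)) (R x z))))} := by
      refine ⟨0, ?_⟩
      rintro v ⟨x', y', z', rfl⟩
      exact (hψmap (hmmem x' y' z')).1
    have hεle : ε ≤ ψ (min 1 (φ (N a) + φ (min a c))) :=
      le_trans h (csInf_le hbdd hvS)
    -- apply φ
    have hφε : φ ε ≤ min 1 (φ (N a) + φ (min a c)) := by
      have := hφmono' hε (hψmap (hmmem x y z)) hεle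
      rwa [hφψ _ (hmmem x y z)] at this
    have hφε2 : φ ε ≤ φ (N a) + φ c := by
      rw [hmin] at hφε
      exact hφε.trans (min_le_right _ _)
    have hkey : max 0 (φ ε - φ c) ≤ φ (N a) := by
      refine max_le (hφmap (hNmap (hTmem x y z))).1 (by linarith)
    have hwle : ψ (max 0 (φ ε - φ c)) ≤ N a := by
      have := hψmono _ (hwmem x z) _ (hφmap (hNmap (hTmem x y z))) hkey
      rwa [hψφ _ (hNmap (hTmem x y z))] at this
    have := hNinvanti _ (hψmap (hwmem x z)) _ (hNmap (hTmem x y z)) hwle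
    rwa [hNinvN _ (hTmem x y z)] at this
  · intro h
    apply le_csInf
    · obtain ⟨x0⟩ := ‹Nonempty U›
      exact ⟨_, x0, x0, x0, rfl⟩
    · rintro v ⟨x, y, z, rfl⟩
      set a := T (R x y) (R y z) with ha
      set c := R x z with hc
      by_cases hlt : c < a
      · have hle := h x y z hlt
        have hmin : min a c = c := min_eq_right hlt.le
        have hNge2 : ψ (max 0 (φ ε - φ c)) ≤ N a := by
          have := hNanti.antitoneOn (hTmem x y z) (hNinvmem _ (hψmap (hwmem x z))) hle
          rwa [hNNinv _ (hψmap (hwmem x z))] at this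
        have hφge : max 0 (φ ε - φ c) ≤ φ (N a) := by
          have := hφmono' (hψmap (hwmem x z)) (hNmap (hTmem x y z)) hNge2
          rwa [hφψ _ (hwmem x z)] at this
        have h1 : φ ε - φ c ≤ φ (N a) := le_trans (le_max_right _ _) hφge
        have h2 : φ ε ≤ min 1 (φ (N a) + φ (min a c)) := by
          rw [hmin]
          exact le_min (hφmap hε).2 (by linarith)
        have := hψmono _ (hφmap hε) _ (hmmem x y z) h2
        rwa [hψφ _ hε] at this
      · push_neg at hlt
        have hmin : min a c = a := min_eq_left hlt
        have hNa : 1 - φ a ≤ φ (N a) := by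
          have h1 : (1 - φ a) ∈ Icc (0:ℝ) 1 := by
            have := hφmap (hTmem x y z)
            exact ⟨by linarith [this.2], by linarith [this.1]⟩
          have := hφmono' (hψmap h1) (hNmap (hTmem x y z)) (hNge a (hTmem x y z))
          rwa [hφψ _ h1] at this
        have hm1 : min 1 (φ (N a) + φ (min a c)) = 1 := by
          rw [hmin]
          exact min_eq_left (by linarith)
        rw [hm1]
        have : ψ 1 = 1 := by
          have h1 := hψφ 1 (by norm_num : (1:ℝ) ∈ Icc (0:ℝ) 1)
          rwa [hφ1] at h1
        rw [this]
        exact hε.2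
end

section
/- Let T and T' be t-norms with T' left-continuous, I_{T'} the residual of T', ε ∈ [0,1], and G_n : [0,1]ⁿ → [0,1] an n-ary aggregation function. Then G_n maps every n-tuple of ε-T-transitive fuzzy relations R₁,…,Rₙ on any universe U (with |U| ≥ 3) to an ε-T-transitive relation R_{G_n}(x,y) = G_n(R₁(x,y),…,Rₙ(x,y)) if and only if T'(ε, T(G_n(a₁,…,aₙ), G_n(b₁,…,bₙ))) ≤ G_n(T'(ε,T(a₁,b₁)),…,T'(ε,T(aₙ,bₙ))) for all a_i, b_i ∈ [0,1]. -/
open Set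

/-- Auxiliary relation used in the proof of Proposition 4.3. -/
noncomputable def trRel {n : ℕ} (T T' : ℝ → ℝ → ℝ) (ε : ℝ) (a b : Fin n → ℝ)
    (i : Fin n) (x y : Fin 3) : ℝ :=
  if x = y then 1
  else if x = 0 ∧ y = 1 then a i
  else if x = 1 ∧ y = 2 then b i
  else if x = 0 ∧ y = 2 then T' ε (T (a i) (b i))
  else 0

/-- Proposition 4.3: an n-ary aggregation function `G` maps every n-tuple of
ε-T-transitive fuzzy relations (with respect to the residual of the left-continuous
t-norm `T'`, i.e. `T'(ε, T(R(x,y),R(y,z))) ≤ R(x,z)`) on any universe with at least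
three elements to an ε-T-transitive relation iff
`T'(ε, T(G(a), G(b))) ≤ G(fun i => T'(ε, T(aᵢ,bᵢ)))` for all `aᵢ, bᵢ ∈ [0,1]`. -/
theorem stmt_12 (n : ℕ)
    (T T' : ℝ → ℝ → ℝ) (hT : IsTnorm T) (hT' : IsTnorm T')
    (hadj : ∀ x ∈ Icc (0:ℝ) 1, ∀ y ∈ Icc (0:ℝ) 1, ∀ z ∈ Icc (0:ℝ) 1,
      (T' x y ≤ z ↔ y ≤ residImp T' x z))
    (ε : ℝ) (hε : ε ∈ Icc (0:ℝ) 1)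
    (G : (Fin n → ℝ) → ℝ)
    (hGmono : ∀ a b : Fin n → ℝ, (∀ i, a i ≤ b i) → G a ≤ G b)
    (hG0 : G (fun _ => 0) = 0) (hG1 : G (fun _ => 1) = 1)
    (hGmem : ∀ a : Fin n → ℝ, (∀ i, a i ∈ Icc (0:ℝ) 1) → G a ∈ Icc (0:ℝ) 1) :
    (∀ (V : Type), (∃ x y z : V, x ≠ y ∧ y ≠ z ∧ x ≠ z) →
      ∀ R : Fin n → V → V → ℝ,
        (∀ i x y, R i x y ∈ Icc (0:ℝ) 1) →
        (∀ i x y z, T' ε (T (R i x y) (R i y z)) ≤ R i x z) →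
        ∀ x y z : V,
          T' ε (T (G (fun i => R i x y)) (G (fun i => R i y z))) ≤
            G (fun i => R i x z)) ↔
      ∀ a b : Fin n → ℝ, (∀ i, a i ∈ Icc (0:ℝ) 1) → (∀ i, b i ∈ Icc (0:ℝ) 1) →
        T' ε (T (G a) (G b)) ≤ G (fun i => T' ε (T (a i) (b i))) := by
  obtain ⟨Tcl, Tcomm, -, Tmono, Tone⟩ := hT
  obtain ⟨T'cl, T'comm, -, T'mono, T'one⟩ := hT'
  have h01 : (1:ℝ) ∈ Icc (0:ℝ) 1 := by norm_num
  have h00 : (0:ℝ) ∈ Icc (0:ℝ) 1 := by norm_num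
  -- T' ε u ≤ u for u ∈ [0,1]
  have hle : ∀ u ∈ Icc (0:ℝ) 1, T' ε u ≤ u := by
    intro u hu
    calc T' ε u = T' u ε := T'comm _ _
      _ ≤ T' u 1 := T'mono _ _ _ hε.2
      _ = u := T'one u hu
  -- T u v ≤ u and ≤ v
  have hTleL : ∀ u ∈ Icc (0:ℝ) 1, ∀ v ∈ Icc (0:ℝ) 1, T u v ≤ u := by
    intro u hu v hv
    calc T u v ≤ T u 1 := Tmono _ _ _ hv.2
      _ = u := Tone u hu
  have hTleR : ∀ u ∈ Icc (0:ℝ) 1, ∀ v ∈ Icc (0:ℝ) 1, T u v ≤ v := by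
    intro u hu v hv
    rw [Tcomm]; exact hTleL v hv u hu
  -- key: T' ε (T u v) ≤ u, ≤ v
  have hKeyL : ∀ u ∈ Icc (0:ℝ) 1, ∀ v ∈ Icc (0:ℝ) 1, T' ε (T u v) ≤ u := by
    intro u hu v hv
    calc T' ε (T u v) ≤ T' ε u := T'mono _ _ _ (hTleL u hu v hv)
      _ ≤ u := hle u hu
  have hKeyR : ∀ u ∈ Icc (0:ℝ) 1, ∀ v ∈ Icc (0:ℝ) 1, T' ε (T u v) ≤ v := by
    intro u hu v hv
    rw [Tcomm]; exact hKeyL v hv u hu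
  constructor
  · intro h a b ha hb
    set c : Fin n → ℝ := fun i => T' ε (T (a i) (b i)) with hc
    have hcmem : ∀ i, c i ∈ Icc (0:ℝ) 1 :=
      fun i => T'cl _ hε _ (Tcl _ (ha i) _ (hb i))
    set R : Fin n → Fin 3 → Fin 3 → ℝ := trRel T T' ε a b with hR
    have hRval : ∀ i x y, R i x y = 1 ∨ R i x y = a i ∨ R i x y = b i ∨
        R i x y = c i ∨ R i x y = 0 := by
      intro i x y
      simp only [hR, trRel]
      split_ifs <;> tauto
    have hRmem : ∀ i x y, R i x y ∈ Icc (0:ℝ) 1 := by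
      intro i x y
      rcases hRval i x y with h' | h' | h' | h' | h' <;> rw [h']
      exacts [h01, ha i, hb i, hcmem i, h00]
    have hRnn : ∀ i x y, 0 ≤ R i x y := fun i x y => (hRmem i x y).1
    -- zero-absorption helpers
    have hz : ∀ w ∈ Icc (0:ℝ) 1, ∀ t, 0 ≤ t → T' ε (T w 0) ≤ t := by
      intro w hw t ht
      have := hKeyR w hw 0 h00
      linarith
    have hz' : ∀ w ∈ Icc (0:ℝ) 1, ∀ t, 0 ≤ t → T' ε (T 0 w) ≤ t := by
      intro w hw t ht; rw [Tcomm]; exact hz w hw t ht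
    have hone : ∀ w ∈ Icc (0:ℝ) 1, T' ε (T 1 w) ≤ w := by
      intro w hw
      rw [Tcomm, Tone w hw]; exact hle w hw
    have hone' : ∀ w ∈ Icc (0:ℝ) 1, T' ε (T w 1) ≤ w := by
      intro w hw; rw [Tone w hw]; exact hle w hw
    have hRtr : ∀ i (x y z : Fin 3), T' ε (T (R i x y) (R i y z)) ≤ R i x z := by
      intro i x y z
      fin_cases x <;> fin_cases y <;> fin_cases z <;>
        simp only [hR, trRel] <;> norm_num [Fin.ext_iff] <;>
        first
          | exact hone _ h01
          | exact hone _ (ha i)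
          | exact hone _ (hb i)
          | exact hone _ (hcmem i)
          | exact hone' _ (ha i)
          | exact hone' _ (hb i)
          | exact hone' _ (hcmem i)
          | exact hz _ h00 _ le_rfl
          | exact hz _ h00 _ zero_le_one
          | exact hz _ h00 _ (ha i).1
          | exact hz _ h00 _ (hb i).1
          | exact hz _ h00 _ (hcmem i).1
          | exact hz _ h01 _ le_rfl
          | exact hz _ h01 _ zero_le_one
          | exact hz _ h01 _ (ha i).1
          | exact hz _ h01 _ (hb i).1
          | exact hz _ h01 _ (hcmem i).1
          | exact hz _ (ha i) _ le_rfl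
          | exact hz _ (ha i) _ zero_le_one
          | exact hz _ (ha i) _ (ha i).1
          | exact hz _ (ha i) _ (hb i).1
          | exact hz _ (ha i) _ (hcmem i).1
          | exact hz _ (hb i) _ le_rfl
          | exact hz _ (hb i) _ zero_le_one
          | exact hz _ (hb i) _ (ha i).1
          | exact hz _ (hb i) _ (hb i).1
          | exact hz _ (hb i) _ (hcmem i).1
          | exact hz _ (hcmem i) _ le_rfl
          | exact hz _ (hcmem i) _ zero_le_one
          | exact hz _ (hcmem i) _ (ha i).1
          | exact hz _ (hcmem i) _ (hb i).1
          | exact hz _ (hcmem i) _ (hcmem i).1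
          | exact hz' _ h00 _ le_rfl
          | exact hz' _ h00 _ zero_le_one
          | exact hz' _ h00 _ (ha i).1
          | exact hz' _ h00 _ (hb i).1
          | exact hz' _ h00 _ (hcmem i).1
          | exact hz' _ h01 _ le_rfl
          | exact hz' _ h01 _ zero_le_one
          | exact hz' _ h01 _ (ha i).1
          | exact hz' _ h01 _ (hb i).1
          | exact hz' _ h01 _ (hcmem i).1
          | exact hz' _ (ha i) _ le_rfl
          | exact hz' _ (ha i) _ zero_le_one
          | exact hz' _ (ha i) _ (ha i).1
          | exact hz' _ (ha i) _ (hb i).1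
          | exact hz' _ (ha i) _ (hcmem i).1
          | exact hz' _ (hb i) _ le_rfl
          | exact hz' _ (hb i) _ zero_le_one
          | exact hz' _ (hb i) _ (ha i).1
          | exact hz' _ (hb i) _ (hb i).1
          | exact hz' _ (hb i) _ (hcmem i).1
          | exact hz' _ (hcmem i) _ le_rfl
          | exact hz' _ (hcmem i) _ zero_le_one
          | exact hz' _ (hcmem i) _ (ha i).1
          | exact hz' _ (hcmem i) _ (hb i).1
          | exact hz' _ (hcmem i) _ (hcmem i).1
          | exact le_rfl
    have key := h (Fin 3) ⟨0, 1, 2, by decide, by decide, by decide⟩ R hRmem hRtr 0 1 2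
    have e1 : (fun i => R i 0 1) = a := by
      funext i; simp [hR, trRel, Fin.ext_iff]
    have e2 : (fun i => R i 1 2) = b := by
      funext i; simp [hR, trRel, Fin.ext_iff]
    have e3 : (fun i => R i 0 2) = c := by
      funext i; simp [hR, trRel, Fin.ext_iff, hc]
    rw [e1, e2, e3] at key
    exact key
  · intro h V _ R hRmem hRtr x y z
    calc T' ε (T (G (fun i => R i x y)) (G (fun i => R i y z)))
        ≤ G (fun i => T' ε (T (R i x y) (R i y z))) :=
          h _ _ (fun i => hRmem i x y) (fun i => hRmem i y z)
      _ ≤ G (fun i => R i x z) := hGmono _ _ (fun i => hRtr i x y z)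
end

section
/- Let T be a t-norm, t an additive generator of a continuous Archimedean t-norm with corresponding T-power implication I^T, ε ∈ (0,1], and G_n an n-ary aggregation function. Then G_n aggregates every n-tuple of ε-T-transitive fuzzy relations (with respect to I^T) into an ε-T-transitive relation if and only if T(G_n(a₁,…,aₙ), G_n(b₁,…,bₙ)) ≤ t⁻¹(ε · t(G_n(t⁻¹(t(T(a₁,b₁))/ε),…, t⁻¹(t(T(aₙ,bₙ))/ε)))) for all a_i, b_i ∈ [0,1]. -/
open Set ENNReal

/-- `tinv` is the pseudo-inverse `t⁻¹` of `t`. -/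
structure IsAdditiveGenerator (t : ℝ → ℝ≥0∞) (tinv : ℝ≥0∞ → ℝ) : Prop where
  continuousOn : ContinuousOn t (Icc 0 1)
  strictAntiOn : StrictAntiOn t (Icc 0 1)
  map_one : t 1 = 0
  tinv_apply : ∀ x ∈ Icc (0:ℝ) 1, tinv (t x) = x
  tinv_of_le : ∀ s, t 0 ≤ s → tinv s = 0

/-- The `T`-power `x^(r)` of the t-norm with additive generator `t`. -/
noncomputable def powT (t : ℝ → ℝ≥0∞) (tinv : ℝ≥0∞ → ℝ) (r : ℝ≥0∞) (x : ℝ) : ℝ := tinv (r * t x)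

namespace IsAdditiveGenerator

variable {t : ℝ → ℝ≥0∞} {tinv : ℝ≥0∞ → ℝ}

theorem exists_apply_eq (ht : IsAdditiveGenerator t tinv) {s : ℝ≥0∞} (hs : s ≤ t 0) :
    ∃ x ∈ Icc (0:ℝ) 1, t x = s :=
  intermediate_value_Icc' zero_le_one ht.continuousOn ⟨ht.map_one ▸ zero_le, hs⟩

theorem apply_le_apply_zero (ht : IsAdditiveGenerator t tinv) {x : ℝ} (hx : x ∈ Icc (0:ℝ) 1) :
    t x ≤ t 0 :=
  ht.strictAntiOn.antitoneOn ⟨le_rfl, zero_le_one⟩ hx hx.1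

theorem tinv_le_iff (ht : IsAdditiveGenerator t tinv) {s : ℝ≥0∞} {r : ℝ}
    (hr : r ∈ Icc (0:ℝ) 1) : tinv s ≤ r ↔ t r ≤ s := by
  by_cases hs : s ≤ t 0
  · obtain ⟨x, hx, rfl⟩ := ht.exists_apply_eq hs
    rw [ht.tinv_apply x hx, ht.strictAntiOn.le_iff_ge hr hx]
  · rw [ht.tinv_of_le s (not_le.1 hs).le]
    exact iff_of_true hr.1 ((ht.apply_le_apply_zero hr).trans (not_le.1 hs).le)

theorem le_tinv_iff (ht : IsAdditiveGenerator t tinv) {s : ℝ≥0∞} {u : ℝ}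
    (hu : u ∈ Icc (0:ℝ) 1) (hs : s ≤ t 0) : u ≤ tinv s ↔ s ≤ t u := by
  obtain ⟨x, hx, rfl⟩ := ht.exists_apply_eq hs
  rw [ht.tinv_apply x hx, ht.strictAntiOn.le_iff_ge hx hu]

theorem tinv_mem (ht : IsAdditiveGenerator t tinv) (s : ℝ≥0∞) : tinv s ∈ Icc (0:ℝ) 1 := by
  by_cases hs : s ≤ t 0
  · obtain ⟨x, hx, rfl⟩ := ht.exists_apply_eq hs
    rwa [ht.tinv_apply x hx]
  · rw [ht.tinv_of_le s (not_le.1 hs).le]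
    exact ⟨le_rfl, zero_le_one⟩

theorem tinv_antitone (ht : IsAdditiveGenerator t tinv) : Antitone tinv := by
  intro s s' hss'
  have hmem := ht.tinv_mem s
  exact (ht.tinv_le_iff hmem).2 (((ht.tinv_le_iff hmem).1 le_rfl).trans hss')

theorem powT_mem (ht : IsAdditiveGenerator t tinv) (r : ℝ≥0∞) (x : ℝ) :
    powT t tinv r x ∈ Icc (0:ℝ) 1 :=
  ht.tinv_mem _

theorem powT_le_powT (ht : IsAdditiveGenerator t tinv) (r : ℝ≥0∞) {x y : ℝ}
    (hx : x ∈ Icc (0:ℝ) 1) (hy : y ∈ Icc (0:ℝ) 1) (hxy : x ≤ y) :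
    powT t tinv r x ≤ powT t tinv r y :=
  ht.tinv_antitone (mul_le_mul_right (ht.strictAntiOn.antitoneOn hx hy hxy) r)

theorem powT_le_self (ht : IsAdditiveGenerator t tinv) {r : ℝ≥0∞} (hr : 1 ≤ r) {x : ℝ}
    (hx : x ∈ Icc (0:ℝ) 1) : powT t tinv r x ≤ x :=
  (ht.tinv_le_iff hx).2 (le_mul_of_one_le_left zero_le hr)

theorem le_powT_iff_powT_inv_le (ht : IsAdditiveGenerator t tinv) {E : ℝ≥0∞}
    (hE0 : E ≠ 0) (hE1 : E ≤ 1) {x y : ℝ} (hx : x ∈ Icc (0:ℝ) 1) (hy : y ∈ Icc (0:ℝ) 1) :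
    x ≤ powT t tinv E y ↔ powT t tinv E⁻¹ x ≤ y := by
  have hEy : E * t y ≤ t 0 :=
    (mul_le_of_le_one_left zero_le hE1).trans (ht.apply_le_apply_zero hy)
  rw [powT, powT, ht.le_tinv_iff hx hEy, ht.tinv_le_iff hy,
    ENNReal.mul_le_iff_le_inv hE0 (ne_top_of_le_ne_top one_ne_top hE1)]

end IsAdditiveGenerator

namespace IsTnorm

variable {T : ℝ → ℝ → ℝ}

theorem mem_Icc (hT : IsTnorm T) {x y : ℝ} (hx : x ∈ Icc (0:ℝ) 1) (hy : y ∈ Icc (0:ℝ) 1) :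
    T x y ∈ Icc (0:ℝ) 1 :=
  hT.1 x hx y hy

theorem map_one_right (hT : IsTnorm T) {x : ℝ} (hx : x ∈ Icc (0:ℝ) 1) : T x 1 = x :=
  hT.2.2.2.2 x hx

theorem map_one_left (hT : IsTnorm T) {x : ℝ} (hx : x ∈ Icc (0:ℝ) 1) : T 1 x = x := by
  rw [hT.2.1, hT.map_one_right hx]

theorem le_left (hT : IsTnorm T) {x y : ℝ} (hx : x ∈ Icc (0:ℝ) 1) (hy : y ∈ Icc (0:ℝ) 1) :
    T x y ≤ x :=
  (hT.2.2.2.1 x y 1 hy.2).trans_eq (hT.map_one_right hx)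

theorem le_right (hT : IsTnorm T) {x y : ℝ} (hx : x ∈ Icc (0:ℝ) 1) (hy : y ∈ Icc (0:ℝ) 1) :
    T x y ≤ y := by
  rw [hT.2.1]
  exact hT.le_left hy hx

end IsTnorm

/-- ε-`T`-transitivity with respect to `I^T`, with `ε` cast to `E : ℝ≥0∞`. -/
def IsPowTransitive {V : Type*} (T : ℝ → ℝ → ℝ) (t : ℝ → ℝ≥0∞) (tinv : ℝ≥0∞ → ℝ)
    (E : ℝ≥0∞) (R : V → V → ℝ) : Prop :=
  ∀ x y z, T (R x y) (R y z) ≤ powT t tinv E (R x z)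

section Transitivity

variable {V : Type*} {T : ℝ → ℝ → ℝ} {t : ℝ → ℝ≥0∞} {tinv : ℝ≥0∞ → ℝ} {E : ℝ≥0∞}

theorem isPowTransitive_iff (hT : IsTnorm T) (ht : IsAdditiveGenerator t tinv)
    (hE0 : E ≠ 0) (hE1 : E ≤ 1) {R : V → V → ℝ} (hR : ∀ x y, R x y ∈ Icc (0:ℝ) 1) :
    IsPowTransitive T t tinv E R ↔
      ∀ x y z, powT t tinv E⁻¹ (T (R x y) (R y z)) ≤ R x z :=
  forall₃_congr fun x y z =>
    ht.le_powT_iff_powT_inv_le hE0 hE1 (hT.mem_Icc (hR x y) (hR y z)) (hR x z)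

def cornerRel (a b c : ℝ) : Fin 3 → Fin 3 → ℝ :=
  ![![1, a, c], ![1, 1, b], ![1, 1, 1]]

theorem cornerRel_mem {a b c : ℝ} (ha : a ∈ Icc (0:ℝ) 1) (hb : b ∈ Icc (0:ℝ) 1)
    (hc : c ∈ Icc (0:ℝ) 1) (x y : Fin 3) : cornerRel a b c x y ∈ Icc (0:ℝ) 1 := by
  have h1 : (1:ℝ) ∈ Icc (0:ℝ) 1 := ⟨zero_le_one, le_rfl⟩
  fin_cases x <;> fin_cases y <;> simp [cornerRel, *]

theorem isPowTransitive_cornerRel (hT : IsTnorm T) (ht : IsAdditiveGenerator t tinv)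
    (hE0 : E ≠ 0) (hE1 : E ≤ 1) {a b : ℝ} (ha : a ∈ Icc (0:ℝ) 1) (hb : b ∈ Icc (0:ℝ) 1) :
    IsPowTransitive T t tinv E (cornerRel a b (powT t tinv E⁻¹ (T a b))) := by
  set c := powT t tinv E⁻¹ (T a b)
  have hc := ht.powT_mem E⁻¹ (T a b)
  have h1 : (1:ℝ) ∈ Icc (0:ℝ) 1 := ⟨zero_le_one, le_rfl⟩
  have hle : ∀ {x}, x ∈ Icc (0:ℝ) 1 → powT t tinv E⁻¹ x ≤ x :=
    ht.powT_le_self (ENNReal.one_le_inv.2 hE1)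
  have hca : c ≤ a := (hle (hT.mem_Icc ha hb)).trans (hT.le_left ha hb)
  have hcb : c ≤ b := (hle (hT.mem_Icc ha hb)).trans (hT.le_right ha hb)
  rw [isPowTransitive_iff hT ht hE0 hE1 (cornerRel_mem ha hb hc)]
  intro x y z
  fin_cases x <;> fin_cases y <;> fin_cases z <;>
    simp only [cornerRel, Fin.zero_eta, Fin.mk_one, Fin.reduceFinMk, Matrix.cons_val,
      hT.map_one_left, hT.map_one_right, ha, hb, hc, h1] <;>
    first
    | exact (ht.powT_mem _ _).2
    | exact le_rfl
    | exact hle ‹_›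
    | exact (hle hc).trans hca
    | exact (hle hc).trans hcb

end Transitivity

theorem stmt_13_general (n : ℕ)
    (T : ℝ → ℝ → ℝ) (hT : IsTnorm T)
    (t : ℝ → ℝ≥0∞) (tinv : ℝ≥0∞ → ℝ)
    (htcont : ContinuousOn t (Icc (0:ℝ) 1))
    (htanti : StrictAntiOn t (Icc (0:ℝ) 1))
    (ht1 : t 1 = 0)
    (htinvt : ∀ x ∈ Icc (0:ℝ) 1, tinv (t x) = x)
    (htinv0 : ∀ s : ℝ≥0∞, t 0 ≤ s → tinv s = 0)
    (ε : ℝ) (hε : ε ∈ Ioc (0:ℝ) 1)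
    (G : (Fin n → ℝ) → ℝ)
    (hGmono : ∀ a b : Fin n → ℝ, (∀ i, a i ≤ b i) → G a ≤ G b)
    (hGmem : ∀ a : Fin n → ℝ, (∀ i, a i ∈ Icc (0:ℝ) 1) → G a ∈ Icc (0:ℝ) 1) :
    (∀ (V : Type), (∃ x y z : V, x ≠ y ∧ y ≠ z ∧ x ≠ z) →
      ∀ R : Fin n → V → V → ℝ,
        (∀ i x y, R i x y ∈ Icc (0:ℝ) 1) →
        (∀ i x y z, T (R i x y) (R i y z) ≤ tinv (ENNReal.ofReal ε * t (R i x z))) →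
        ∀ x y z : V,
          T (G (fun i => R i x y)) (G (fun i => R i y z)) ≤
            tinv (ENNReal.ofReal ε * t (G (fun i => R i x z)))) ↔
      ∀ a b : Fin n → ℝ, (∀ i, a i ∈ Icc (0:ℝ) 1) → (∀ i, b i ∈ Icc (0:ℝ) 1) →
        T (G a) (G b) ≤
          tinv (ENNReal.ofReal ε *
            t (G (fun i => tinv (t (T (a i) (b i)) / ENNReal.ofReal ε)))) := by
  have ht : IsAdditiveGenerator t tinv := ⟨htcont, htanti, ht1, htinvt, htinv0⟩
  set E := ENNReal.ofReal ε
  have hE0 : E ≠ 0 := (ENNReal.ofReal_pos.2 hε.1).ne'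
  have hE1 : E ≤ 1 := ENNReal.ofReal_le_one.2 hε.2
  have hdiv : ∀ x, tinv (t x / E) = powT t tinv E⁻¹ x := fun x => by
    rw [powT, ENNReal.div_eq_inv_mul]
  simp only [hdiv]
  constructor
  · intro h a b ha hb
    exact h (Fin 3) ⟨0, 1, 2, by decide, by decide, by decide⟩
      (fun i => cornerRel (a i) (b i) (powT t tinv E⁻¹ (T (a i) (b i))))
      (fun i => cornerRel_mem (ha i) (hb i) (ht.powT_mem _ _))
      (fun i => isPowTransitive_cornerRel hT ht hE0 hE1 (ha i) (hb i)) 0 1 2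
  · intro h V _ R hR hRtrans x y z
    have hpow := fun i => (isPowTransitive_iff hT ht hE0 hE1 (hR i)).1 (hRtrans i) x y z
    exact (h _ _ (hR · x y) (hR · y z)).trans <| ht.powT_le_powT E
      (hGmem _ fun _ => ht.powT_mem _ _) (hGmem _ (hR · x z)) (hGmono _ _ hpow)

/-- Proposition 4.4: `G` aggregates every n-tuple of ε-T-transitive fuzzy relations
with respect to the T-power implication generated by the additive generator `t`
(i.e. `T(R(x,y),R(y,z)) ≤ t⁻¹(ε·t(R(x,z)))`) into an ε-T-transitive relation iff
`T(G(a),G(b)) ≤ t⁻¹(ε · t(G(fun i => t⁻¹(t(T(aᵢ,bᵢ))/ε))))` for all `aᵢ,bᵢ ∈ [0,1]`. -/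
theorem stmt_13 (n : ℕ)
    (T : ℝ → ℝ → ℝ) (hT : IsTnorm T)
    (t : ℝ → ℝ≥0∞) (tinv : ℝ≥0∞ → ℝ)
    (htcont : ContinuousOn t (Icc (0:ℝ) 1))
    (htanti : StrictAntiOn t (Icc (0:ℝ) 1))
    (ht1 : t 1 = 0)
    (htinvt : ∀ x ∈ Icc (0:ℝ) 1, tinv (t x) = x)
    (htinv0 : ∀ s : ℝ≥0∞, t 0 ≤ s → tinv s = 0)
    (htinvmem : ∀ s : ℝ≥0∞, tinv s ∈ Icc (0:ℝ) 1)
    (ε : ℝ) (hε : ε ∈ Ioc (0:ℝ) 1)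
    (G : (Fin n → ℝ) → ℝ)
    (hGmono : ∀ a b : Fin n → ℝ, (∀ i, a i ≤ b i) → G a ≤ G b)
    (hG0 : G (fun _ => 0) = 0) (hG1 : G (fun _ => 1) = 1)
    (hGmem : ∀ a : Fin n → ℝ, (∀ i, a i ∈ Icc (0:ℝ) 1) → G a ∈ Icc (0:ℝ) 1) :
    (∀ (V : Type), (∃ x y z : V, x ≠ y ∧ y ≠ z ∧ x ≠ z) →
      ∀ R : Fin n → V → V → ℝ,
        (∀ i x y, R i x y ∈ Icc (0:ℝ) 1) →
        (∀ i x y z, T (R i x y) (R i y z) ≤ tinv (ENNReal.ofReal ε * t (R i x z))) →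
        ∀ x y z : V,
          T (G (fun i => R i x y)) (G (fun i => R i y z)) ≤
            tinv (ENNReal.ofReal ε * t (G (fun i => R i x z)))) ↔
      ∀ a b : Fin n → ℝ, (∀ i, a i ∈ Icc (0:ℝ) 1) → (∀ i, b i ∈ Icc (0:ℝ) 1) →
        T (G a) (G b) ≤
          tinv (ENNReal.ofReal ε *
            t (G (fun i => tinv (t (T (a i) (b i)) / ENNReal.ofReal ε)))) :=
  stmt_13_general n T hT t tinv htcont htanti ht1 htinvt htinv0 ε hε G hGmono hGmem
end

section
/- Let ε ∈ (0,1], T = T_P the product t-norm, and suppose R₁,…,Rₙ are fuzzy relations on U each satisfying ε · R_i(x,y)·R_i(y,z) ≤ R_i(x,z) for all x,y,z (ε-T_P-transitivity with respect to the Goguen implication). Let ω₁,…,ωₙ ≥ 0 with Σω_i = 1 and define the weighted geometric mean R_G(x,y) = Π_i R_i(x,y)^{ω_i}. Then ε · R_G(x,y)·R_G(y,z) ≤ R_G(x,z) for all x,y,z, i.e. the weighted geometric mean preserves ε-T_P-transitivity. -/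
open Set

/-- Example 4.6: the weighted geometric mean preserves ε-T_P-transitivity
(with respect to the Goguen implication), i.e. if each `R i` satisfies
`ε · R_i(x,y)·R_i(y,z) ≤ R_i(x,z)`, then so does
`R_G(x,y) = ∏ i, R_i(x,y)^{ω_i}` for nonnegative weights summing to 1. -/
theorem stmt_15 {U : Type*} (n : ℕ)
    (ε : ℝ) (hε : ε ∈ Ioc (0:ℝ) 1)
    (R : Fin n → U → U → ℝ)
    (hR : ∀ i x y, R i x y ∈ Icc (0:ℝ) 1)
    (htrans : ∀ i, ∀ x y z : U, ε * (R i x y * R i y z) ≤ R i x z)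
    (ω : Fin n → ℝ) (hω : ∀ i, 0 ≤ ω i) (hωsum : ∑ i, ω i = 1) :
    ∀ x y z : U,
      ε * ((∏ i, R i x y ^ ω i) * ∏ i, R i y z ^ ω i) ≤ ∏ i, R i x z ^ ω i := by
  intro x y z
  have hε0 : (0:ℝ) < ε := hε.1
  have hεprod : ε = ∏ i, ε ^ ω i := by
    rw [← Real.rpow_sum_of_pos hε0, hωsum, Real.rpow_one]
  calc ε * ((∏ i, R i x y ^ ω i) * ∏ i, R i y z ^ ω i)
      = ∏ i, (ε * (R i x y * R i y z)) ^ ω i := by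
        conv_lhs => rw [hεprod]
        rw [← Finset.prod_mul_distrib, ← Finset.prod_mul_distrib]
        refine Finset.prod_congr rfl fun i _ => ?_
        rw [Real.mul_rpow hε0.le (mul_nonneg (hR i x y).1 (hR i y z).1),
          Real.mul_rpow (hR i x y).1 (hR i y z).1]
    _ ≤ ∏ i, R i x z ^ ω i := by
        refine Finset.prod_le_prod (fun i _ => ?_) (fun i _ => ?_)
        · exact Real.rpow_nonneg (mul_nonneg hε0.le (mul_nonneg (hR i x y).1 (hR i y z).1)) _
        · exact Real.rpow_le_rpow (mul_nonneg hε0.le (mul_nonneg (hR i x y).1 (hR i y z).1))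
            (htrans i x y z) (hω i)
end

section
/- Let T be a continuous Archimedean t-norm with additive generator t (with t(0) < ∞ allowed), and let R be a fuzzy relation on U that is ε-T-transitive in the sense that T(T(R(x,y),R(y,z)), ε) ≤ R(x,z) for all x,y,z. Define d(x,y) = t(R(x,y)). Then d satisfies the relaxed triangle inequality d(x,z) ≤ t(ε) + d(x,y) + d(y,z) for all x,y,z ∈ U. -/
open Set ENNReal

/-! Since `t` is antitone, `ε`-transitivity gives `t (R x z) ≤ t (T (T (R x y) (R y z)) ε)`, and
a generated t-norm satisfies `t (T a b) ≤ t a + t b`: the truncation at `t 0` only lowers the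
sum. -/

theorem apply_inv_min_le {α β : Type*} [LinearOrder β] {t : α → β} {tinv : β → α} {c : β}
    (h : ∀ s ≤ c, t (tinv s) = s) (s : β) : t (tinv (min c s)) ≤ s := by
  rw [h _ (min_le_left _ _)]
  exact min_le_right _ _

theorem stmt_16_general {U : Type*}
    (t : ℝ → ℝ≥0∞) (tinv : ℝ≥0∞ → ℝ)
    (htanti : StrictAntiOn t (Icc (0:ℝ) 1))
    (htinvmem : ∀ s : ℝ≥0∞, tinv s ∈ Icc (0:ℝ) 1)
    (httinv : ∀ s : ℝ≥0∞, s ≤ t 0 → t (tinv s) = s)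
    (T : ℝ → ℝ → ℝ)
    (hTgen : ∀ a b : ℝ, T a b = tinv (min (t 0) (t a + t b)))
    (R : U → U → ℝ) (hR : ∀ x y, R x y ∈ Icc (0:ℝ) 1)
    (ε : ℝ)
    (htrans : ∀ x y z : U, T (T (R x y) (R y z)) ε ≤ R x z) :
    ∀ x y z : U, t (R x z) ≤ t ε + t (R x y) + t (R y z) := by
  intro x y z
  have hT_le : ∀ a b, t (T a b) ≤ t a + t b := fun a b ↦
    hTgen a b ▸ apply_inv_min_le httinv _
  have hT_mem : ∀ a b, T a b ∈ Icc (0:ℝ) 1 := fun a b ↦ hTgen a b ▸ htinvmem _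
  calc t (R x z) ≤ t (T (T (R x y) (R y z)) ε) :=
        htanti.antitoneOn (hT_mem _ _) (hR x z) (htrans x y z)
    _ ≤ t (T (R x y) (R y z)) + t ε := hT_le _ _
    _ ≤ t (R x y) + t (R y z) + t ε := by gcongr; exact hT_le _ _
    _ = t ε + t (R x y) + t (R y z) := by ring

/-- For a continuous Archimedean t-norm `T` with additive generator `t`
(`T(x,y) = t⁻¹(min(t(0), t(x)+t(y)))`), if the fuzzy relation `R` satisfies
`T(T(R(x,y),R(y,z)), ε) ≤ R(x,z)` for all `x,y,z`, then `d(x,y) = t(R(x,y))`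
satisfies the relaxed triangle inequality `d(x,z) ≤ t(ε) + d(x,y) + d(y,z)`. -/
theorem stmt_16 {U : Type*}
    (t : ℝ → ℝ≥0∞) (tinv : ℝ≥0∞ → ℝ)
    (htcont : ContinuousOn t (Icc (0:ℝ) 1))
    (htanti : StrictAntiOn t (Icc (0:ℝ) 1))
    (ht1 : t 1 = 0)
    (htinvt : ∀ x ∈ Icc (0:ℝ) 1, tinv (t x) = x)
    (htinv0 : ∀ s : ℝ≥0∞, t 0 ≤ s → tinv s = 0)
    (htinvmem : ∀ s : ℝ≥0∞, tinv s ∈ Icc (0:ℝ) 1)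
    (httinv : ∀ s : ℝ≥0∞, s ≤ t 0 → t (tinv s) = s)
    (T : ℝ → ℝ → ℝ)
    (hTgen : ∀ a b : ℝ, T a b = tinv (min (t 0) (t a + t b)))
    (R : U → U → ℝ) (hR : ∀ x y, R x y ∈ Icc (0:ℝ) 1)
    (ε : ℝ) (hε : ε ∈ Icc (0:ℝ) 1)
    (htrans : ∀ x y z : U, T (T (R x y) (R y z)) ε ≤ R x z) :
    ∀ x y z : U, t (R x z) ≤ t ε + t (R x y) + t (R y z) :=
  stmt_16_general t tinv htanti htinvmem httinv T hTgen R hR ε htrans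
end

section
/- Let φ be an increasing bijection on [0,1] and (T_L)_φ(x,y) = φ⁻¹(max(0, φ(x)+φ(y)−1)). Suppose R is a fuzzy relation on U such that R(x,y) ≥ φ⁻¹(1 − φ(ε)) for all x,y ∈ U and the relation R'(x,y) = (T_L)_φ(R(x,y), ε) is (T_L)_φ-transitive. Then R is ε-(T_L)_φ-transitive with respect to the (S,N)-implication I(x,y) = φ⁻¹(min(1, 1 − φ(x) + φ(y))), i.e. (T_L)_φ(R(x,y),R(y,z)) ≤ φ⁻¹(min(1, 1 + φ(R(x,z)) − φ(ε))) for all x,y,z. -/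
open Set

/-- Remark 5 / Example 3.5: a partial converse to Corollary 3.3.  If
`R(x,y) ≥ φ⁻¹(1 − φ(ε))` for all `x,y` and `R'(x,y) = (T_L)_φ(R(x,y), ε)` is
(T_L)_φ-transitive, then `R` is ε-(T_L)_φ-transitive with respect to the
(S,N)-implication `I(x,y) = φ⁻¹(min(1, 1 − φ(x) + φ(y)))`, i.e.
`(T_L)_φ(R(x,y),R(y,z)) ≤ φ⁻¹(min(1, 1 + φ(R(x,z)) − φ(ε)))` for all `x,y,z`. -/
theorem stmt_18 {U : Type*}
    (φ ψ : ℝ → ℝ)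
    (hφmono : StrictMonoOn φ (Icc (0:ℝ) 1))
    (hφ0 : φ 0 = 0) (hφ1 : φ 1 = 1)
    (hφmap : MapsTo φ (Icc (0:ℝ) 1) (Icc (0:ℝ) 1))
    (hψmap : MapsTo ψ (Icc (0:ℝ) 1) (Icc (0:ℝ) 1))
    (hψφ : ∀ x ∈ Icc (0:ℝ) 1, ψ (φ x) = x)
    (hφψ : ∀ x ∈ Icc (0:ℝ) 1, φ (ψ x) = x)
    (TL : ℝ → ℝ → ℝ)
    (hTL : ∀ a b, TL a b = ψ (max 0 (φ a + φ b - 1)))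
    (R : U → U → ℝ) (hR : ∀ x y, R x y ∈ Icc (0:ℝ) 1)
    (ε : ℝ) (hε : ε ∈ Icc (0:ℝ) 1)
    (hbound : ∀ x y : U, R x y ≥ ψ (1 - φ ε))
    (htrans : ∀ x y z : U,
      TL (TL (R x y) ε) (TL (R y z) ε) ≤ TL (R x z) ε) :
    ∀ x y z : U,
      TL (R x y) (R y z) ≤ ψ (min 1 (1 + φ (R x z) - φ ε)) := by
  intro x y z
  have he : φ ε ∈ Icc (0:ℝ) 1 := hφmap hε
  have ha : φ (R x y) ∈ Icc (0:ℝ) 1 := hφmap (hR x y)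
  have hb : φ (R y z) ∈ Icc (0:ℝ) 1 := hφmap (hR y z)
  have hc : φ (R x z) ∈ Icc (0:ℝ) 1 := hφmap (hR x z)
  set a := φ (R x y) with hadef
  set b := φ (R y z) with hbdef
  set c := φ (R x z) with hcdef
  set e := φ ε with hedef
  have h1e : (1 - e) ∈ Icc (0:ℝ) 1 := ⟨by linarith [he.2], by linarith [he.1]⟩
  -- ψ monotone on [0,1]
  have hψmono : ∀ u ∈ Icc (0:ℝ) 1, ∀ v ∈ Icc (0:ℝ) 1, u ≤ v → ψ u ≤ ψ v := by
    intro u hu v hv huv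
    have := (hφmono.le_iff_le (hψmap hu) (hψmap hv)).mp
    rw [hφψ u hu, hφψ v hv] at this
    exact this huv
  -- lower bounds from hbound
  have hlow : ∀ p q : U, 1 - e ≤ φ (R p q) := by
    intro p q
    have h := hbound p q
    have := (hφmono.le_iff_le (hψmap h1e) (hR p q)).mpr h
    rwa [hφψ _ h1e] at this
  have hae : 1 - e ≤ a := hlow x y
  have hbe : 1 - e ≤ b := hlow y z
  have hce : 1 - e ≤ c := hlow x z
  -- simplify TL (R _ _) ε
  have hTLa : TL (R x y) ε = ψ (a + e - 1) := by
    rw [hTL]; congr 1; rw [max_eq_right]; linarith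
  have hTLb : TL (R y z) ε = ψ (b + e - 1) := by
    rw [hTL]; congr 1; rw [max_eq_right]; linarith
  have hTLc : TL (R x z) ε = ψ (c + e - 1) := by
    rw [hTL]; congr 1; rw [max_eq_right]; linarith
  have hmemA : (a + e - 1) ∈ Icc (0:ℝ) 1 := ⟨by linarith, by linarith [ha.2, he.2]⟩
  have hmemB : (b + e - 1) ∈ Icc (0:ℝ) 1 := ⟨by linarith, by linarith [hb.2, he.2]⟩
  have hmemC : (c + e - 1) ∈ Icc (0:ℝ) 1 := ⟨by linarith, by linarith [hc.2, he.2]⟩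
  -- exploit transitivity hypothesis
  have ht := htrans x y z
  rw [hTLa, hTLb, hTLc, hTL] at ht
  rw [hφψ _ hmemA, hφψ _ hmemB] at ht
  have hmemM : max 0 (a + e - 1 + (b + e - 1) - 1) ∈ Icc (0:ℝ) 1 := by
    constructor
    · exact le_max_left _ _
    · apply max_le (by norm_num); linarith [ha.2, hb.2, he.2]
  have hkey : max 0 (a + e - 1 + (b + e - 1) - 1) ≤ c + e - 1 := by
    have := (hφmono.le_iff_le (hψmap hmemM) (hψmap hmemC)).mpr ht
    rwa [hφψ _ hmemM, hφψ _ hmemC] at this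
  have hkey2 : a + b - 1 ≤ 1 + c - e := by
    have := le_trans (le_max_right 0 (a + e - 1 + (b + e - 1) - 1)) hkey
    linarith
  -- finish
  rw [hTL]
  have hmemG : max 0 (a + b - 1) ∈ Icc (0:ℝ) 1 := by
    refine ⟨le_max_left _ _, ?_⟩
    apply max_le (by norm_num); linarith [ha.2, hb.2]
  have hmemH : min 1 (1 + c - e) ∈ Icc (0:ℝ) 1 := by
    refine ⟨le_min (by norm_num) (by linarith [hc.1, he.2]), min_le_left _ _⟩
  apply hψmono _ hmemG _ hmemH
  apply max_le
  · exact le_min (by norm_num) (by linarith [hc.1, he.2])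
  · exact le_min (by linarith [ha.2, hb.2]) hkey2
end
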